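/- Let Γ ≤ GL_r(ℤ) be a strongly irreducible subgroup containing a proximal element, and let p be a generating probability measure on Γ. Then for any p-stationary probability measure ν on the projective space ℙ(ℝ^r), one has ν([L]) = 0 for every hyperplane L ⊆ ℝ^r, where [L] denotes the image of L \ {0} in ℙ(ℝ^r). -/

import Mathlib

open MeasureTheory

/-- A subgroup `Γ ≤ GL_r(ℤ)` is strongly irreducible if every finite-index subgroup of
`Γ` acts irreducibly on `ℝ^r`. -/
def StronglyIrreducible {r : ℕ} (Γ : Subgroup (Matrix.GeneralLinearGroup (Fin r) ℤ)) : Prop :=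
  ∀ Δ : Subgroup (Matrix.GeneralLinearGroup (Fin r) ℤ), Δ ≤ Γ →
    (Δ.subgroupOf Γ).FiniteIndex →
    ∀ W : Submodule ℝ (Fin r → ℝ),
      (∀ g ∈ Δ, ∀ x ∈ W,
        ((g : Matrix (Fin r) (Fin r) ℤ).map (Int.cast : ℤ → ℝ)).mulVec x ∈ W) →
      W = ⊥ ∨ W = ⊤

/-- An element `g ∈ GL_r(ℤ)` is proximal if it has a unique eigenvalue of maximal
absolute value and the corresponding eigenspace is one-dimensional. -/
def IsProximal {r : ℕ} (g : Matrix.GeneralLinearGroup (Fin r) ℤ) : Prop :=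
  ∃ lam : ℂ,
    Module.End.HasEigenvalue
      (Matrix.toLin' ((g : Matrix (Fin r) (Fin r) ℤ).map (Int.cast : ℤ → ℂ))) lam ∧
    (∀ lam' : ℂ,
      Module.End.HasEigenvalue
        (Matrix.toLin' ((g : Matrix (Fin r) (Fin r) ℤ).map (Int.cast : ℤ → ℂ))) lam' →
      lam' ≠ lam → ‖lam'‖ < ‖lam‖) ∧
    Module.finrank ℂ
      (Module.End.eigenspace
        (Matrix.toLin' ((g : Matrix (Fin r) (Fin r) ℤ).map (Int.cast : ℤ → ℂ))) lam) = 1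

/-- The discrete σ-algebra on the (countable) group `GL_r(ℤ)`. -/
instance {r : ℕ} : MeasurableSpace (Matrix.GeneralLinearGroup (Fin r) ℤ) := ⊤

/-- The quotient topology on the projective space `ℙ(ℝ^r)`. -/
instance {r : ℕ} : TopologicalSpace (Projectivization ℝ (Fin r → ℝ)) :=
  inferInstanceAs (TopologicalSpace (Quotient (projectivizationSetoid ℝ (Fin r → ℝ))))

/-- The Borel σ-algebra on the projective space `ℙ(ℝ^r)`. -/
instance {r : ℕ} : MeasurableSpace (Projectivization ℝ (Fin r → ℝ)) := borel _

set_option linter.unnecessarySimpa false in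
/-- The projectivized action of `g ∈ GL_r(ℤ)` on `ℙ(ℝ^r)`. -/
noncomputable def glProjMap {r : ℕ} (g : Matrix.GeneralLinearGroup (Fin r) ℤ) :
    Projectivization ℝ (Fin r → ℝ) → Projectivization ℝ (Fin r → ℝ) :=
  Projectivization.map (Matrix.toLin' ((g : Matrix (Fin r) (Fin r) ℤ).map (Int.cast : ℤ → ℝ)))
    (by
      intro x y hxy
      have hZ : ((g⁻¹ : Matrix.GeneralLinearGroup (Fin r) ℤ) : Matrix (Fin r) (Fin r) ℤ) *
          (g : Matrix (Fin r) (Fin r) ℤ) = 1 := by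
        simpa using congrArg Units.val (inv_mul_cancel g)
      have hm : (((g⁻¹ : Matrix.GeneralLinearGroup (Fin r) ℤ) : Matrix (Fin r) (Fin r) ℤ).map
            (Int.cast : ℤ → ℝ)) * ((g : Matrix (Fin r) (Fin r) ℤ).map (Int.cast : ℤ → ℝ)) =
          1 := by
        rw [show (Int.cast : ℤ → ℝ) = ⇑(Int.castRingHom ℝ) from rfl, ← Matrix.map_mul, hZ,
          Matrix.map_one _ (map_zero _) (map_one _)]
      have hx := congrArg
        (Matrix.toLin' (((g⁻¹ : Matrix.GeneralLinearGroup (Fin r) ℤ) :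
          Matrix (Fin r) (Fin r) ℤ).map (Int.cast : ℤ → ℝ))) hxy
      rw [← Matrix.toLin'_mul_apply, ← Matrix.toLin'_mul_apply, hm] at hx
      simpa [Matrix.toLin'_one] using hx)

/-!
Furstenberg's argument. If some proper subspace had positive `ν`-mass, take such subspaces of
minimal dimension `d`. Two distinct `d`-dimensional subspaces meet in a smaller one, hence in a
null set, so only finitely many of them have mass above any fixed `ε > 0`; the maximal mass is
therefore attained, by a finite nonempty family `F`. Stationarity writes the mass of `W ∈ F` as the
`p`-average of the masses of the `g⁻¹ • W`, none of which exceeds the maximum, so every generator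
maps `F` into itself and `Γ` permutes the finite set `F`. The stabiliser in `Γ` of `W ∈ F` then has
finite index and preserves `W`, contradicting strong irreducibility.
-/

open Module Pointwise Matrix
open scoped LinearAlgebra.Projectivization ENNReal

theorem Set.Finite.mem_stabilizer_of_mapsTo {G α : Type*} [Group G] [MulAction G α] {F : Set α}
    (hF : F.Finite) {g : G} (h : Set.MapsTo (g • ·) F F) : g ∈ MulAction.stabilizer G F := by
  rw [MulAction.mem_stabilizer_iff, ← Set.image_smul]
  exact ((hF.injOn_iff_bijOn_of_mapsTo h).mp (MulAction.injective g).injOn).image_eq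

theorem MulAction.finiteIndex_stabilizer_of_finite_orbit {G α : Type*} [Group G] [MulAction G α]
    {x : α} (h : (orbit G x).Finite) : (stabilizer G x).FiniteIndex := by
  rw [Subgroup.finiteIndex_iff, index_stabilizer]
  exact Set.ncard_ne_zero_of_mem (mem_orbit_self x) h

theorem MeasureTheory.eq_of_le_of_lintegral_eq_of_measure_singleton_ne_zero {Ω : Type*}
    [MeasurableSpace Ω] {p : Measure Ω} [IsProbabilityMeasure p] {ψ : Ω → ℝ≥0∞} {c : ℝ≥0∞}
    (hle : ∀ ω, ψ ω ≤ c) (hint : ∫⁻ ω, ψ ω ∂p = c) (hc : c ≠ ∞)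
    {ω : Ω} (hω : p {ω} ≠ 0) : ψ ω = c := by
  have hae : ψ =ᵐ[p] fun _ => c :=
    ae_eq_of_ae_le_of_lintegral_le (ae_of_all _ hle) (hint ▸ hc) aemeasurable_const
      (by simp [hint])
  by_contra hne
  exact hω (measure_mono_null (Set.singleton_subset_iff.mpr hne) (ae_iff.mp hae))

namespace Submodule

variable {K V : Type*} [Field K] [AddCommGroup V] [Module K V]

theorem mem_projectivization_iff_rep_mem (W : Submodule K V) (x : ℙ K V) :
    x ∈ W.projectivization ↔ x.rep ∈ W := by
  nth_rw 1 [← x.mk_rep]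
  exact W.mk_mem_projectivization_iff _

theorem coe_projectivization_inf (W₁ W₂ : Submodule K V) :
    ((W₁ ⊓ W₂).projectivization : Set (ℙ K V)) =
      (W₁.projectivization : Set (ℙ K V)) ∩ W₂.projectivization := by
  ext x
  simp only [SetLike.mem_coe, Set.mem_inter_iff, mem_projectivization_iff_rep_mem, mem_inf]

theorem finrank_inf_lt_of_ne [FiniteDimensional K V] {W₁ W₂ : Submodule K V}
    (h : finrank K W₁ = finrank K W₂) (hne : W₁ ≠ W₂) : finrank K ↥(W₁ ⊓ W₂) < finrank K W₁ := by
  refine finrank_lt_finrank_of_lt (inf_le_left.lt_of_ne fun heq => hne ?_)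
  exact eq_of_le_of_finrank_eq (inf_eq_left.mp heq) h

variable {G : Type*} [Group G] [DistribMulAction G V] [SMulCommClass G K V]

theorem mem_inv_pointwise_smul_iff {g : G} {W : Submodule K V} {v : V} :
    v ∈ g⁻¹ • W ↔ g • v ∈ W := by
  rw [mem_smul_pointwise_iff_exists]
  exact ⟨fun ⟨u, hu, hv⟩ => hv ▸ (smul_inv_smul g u).symm ▸ hu,
    fun h => ⟨g • v, h, inv_smul_smul g v⟩⟩

theorem finrank_pointwise_smul (g : G) (W : Submodule K V) : finrank K ↥(g • W) = finrank K W :=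
  LinearEquiv.finrank_map_eq (DistribMulAction.toLinearEquiv K V g) W

end Submodule

section GLAction

variable {r : ℕ}

noncomputable def glIntToLinear : GL (Fin r) ℤ →* LinearMap.GeneralLinearGroup ℝ (Fin r → ℝ) :=
  GeneralLinearGroup.toLin.toMonoidHom.comp (GeneralLinearGroup.map (Int.castRingHom ℝ))

/-- Makes `glProjMap g` Mathlib's projective action `g • ·` and lets `GL (Fin r) ℤ` act
pointwise on subspaces of `ℝ^r`. -/
noncomputable instance : DistribMulAction (GL (Fin r) ℤ) (Fin r → ℝ) :=
  DistribMulAction.compHom _ glIntToLinear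

instance : SMulCommClass (GL (Fin r) ℤ) ℝ (Fin r → ℝ) :=
  ⟨fun g c v => (glIntToLinear g : (Fin r → ℝ) →ₗ[ℝ] (Fin r → ℝ)).map_smul c v⟩

theorem Matrix.GeneralLinearGroup.smul_eq_mulVec_map (g : GL (Fin r) ℤ) (v : Fin r → ℝ) :
    g • v = (g : Matrix (Fin r) (Fin r) ℤ).map (Int.cast : ℤ → ℝ) *ᵥ v :=
  rfl

theorem glProjMap_eq_smul (g : GL (Fin r) ℤ) : glProjMap g = (g • ·) :=
  rfl

end GLAction

section ProjectiveSpace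

variable {r : ℕ}

instance : BorelSpace (ℙ ℝ (Fin r → ℝ)) := ⟨rfl⟩

theorem Submodule.isClosed_projectivization (W : Submodule ℝ (Fin r → ℝ)) :
    IsClosed (W.projectivization : Set (ℙ ℝ (Fin r → ℝ))) := by
  refine (isQuotientMap_quotient_mk' (s := projectivizationSetoid ℝ (Fin r → ℝ))).isClosed_preimage
    (s := (W.projectivization : Set (ℙ ℝ (Fin r → ℝ)))).mp ?_
  exact W.closed_of_finiteDimensional.preimage continuous_subtype_val

theorem Submodule.measurableSet_projectivization (W : Submodule ℝ (Fin r → ℝ)) :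
    MeasurableSet (W.projectivization : Set (ℙ ℝ (Fin r → ℝ))) :=
  W.isClosed_projectivization.measurableSet

theorem preimage_glProjMap_projectivization (g : GL (Fin r) ℤ) (W : Submodule ℝ (Fin r → ℝ)) :
    glProjMap g ⁻¹' W.projectivization = (g⁻¹ • W).projectivization := by
  ext x
  induction x using Projectivization.ind with
  | h v hv =>
    simp only [glProjMap_eq_smul, Set.mem_preimage, Projectivization.smul_mk, SetLike.mem_coe,
      Submodule.mk_mem_projectivization_iff, Submodule.mem_inv_pointwise_smul_iff]

end ProjectiveSpace

def MeasureTheory.Measure.IsStationary {r : ℕ} (ν : Measure (ℙ ℝ (Fin r → ℝ)))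
    (p : Measure (GL (Fin r) ℤ)) : Prop :=
  ∀ A : Set (ℙ ℝ (Fin r → ℝ)), MeasurableSet A → ν A = ∫⁻ g, ν (glProjMap g ⁻¹' A) ∂p

section HeaviestSubspaces

variable {r : ℕ} (ν : Measure (ℙ ℝ (Fin r → ℝ)))

def heaviestSubspaces (d : ℕ) : Set (Submodule ℝ (Fin r → ℝ)) :=
  {W | finrank ℝ W = d ∧ ∀ V : Submodule ℝ (Fin r → ℝ), finrank ℝ V = d →
    ν V.projectivization ≤ ν W.projectivization}

variable {ν} {d : ℕ}

theorem finite_setOf_finrank_eq_and_le_measure_projectivization [IsFiniteMeasure ν]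
    (hnull : ∀ V : Submodule ℝ (Fin r → ℝ), finrank ℝ V < d → ν V.projectivization = 0)
    {ε : ℝ≥0∞} (hε : 0 < ε) :
    {W : Submodule ℝ (Fin r → ℝ) | finrank ℝ W = d ∧ ε ≤ ν W.projectivization}.Finite := by
  let S : {W : Submodule ℝ (Fin r → ℝ) // finrank ℝ W = d} → Set (ℙ ℝ (Fin r → ℝ)) :=
    fun W => W.1.projectivization
  have hdisj : Pairwise (Function.onFun (AEDisjoint ν) S) := fun V W hVW => by
    change ν (_ ∩ _) = 0
    rw [← Submodule.coe_projectivization_inf]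
    exact hnull _ ((Submodule.finrank_inf_lt_of_ne (V.2.trans W.2.symm)
      (Subtype.coe_injective.ne hVW)).trans_eq V.2)
  have hfin := Measure.finite_const_le_meas_of_disjoint_iUnion₀ ν hε
    (fun W => W.1.measurableSet_projectivization.nullMeasurableSet) hdisj (measure_ne_top ν _)
  convert hfin.image Subtype.val using 1
  ext W
  exact ⟨fun ⟨hW, hε⟩ => ⟨⟨W, hW⟩, hε, rfl⟩, fun ⟨V, hV, hVW⟩ => hVW ▸ ⟨V.2, hV⟩⟩

theorem heaviestSubspaces_finite_and_nonempty [IsFiniteMeasure ν]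
    (hnull : ∀ V : Submodule ℝ (Fin r → ℝ), finrank ℝ V < d → ν V.projectivization = 0)
    {W : Submodule ℝ (Fin r → ℝ)} (hW : finrank ℝ W = d) (hpos : 0 < ν W.projectivization) :
    (heaviestSubspaces ν d).Finite ∧ (heaviestSubspaces ν d).Nonempty := by
  have hfin := finite_setOf_finrank_eq_and_le_measure_projectivization hnull hpos
  obtain ⟨W₀, ⟨hW₀, hWW₀⟩, hmax⟩ :=
    Set.exists_max_image _ (fun V => ν V.projectivization) hfin ⟨W, hW, le_rfl⟩
  have hW₀_heaviest : W₀ ∈ heaviestSubspaces ν d := ⟨hW₀, fun V hV =>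
    (le_total (ν W.projectivization) (ν V.projectivization)).elim
      (fun hWV => hmax V ⟨hV, hWV⟩) (fun hVW => hVW.trans hWW₀)⟩
  exact ⟨hfin.subset fun V hV => ⟨hV.1, hWW₀.trans (hV.2 W₀ hW₀)⟩, W₀, hW₀_heaviest⟩

theorem MeasureTheory.Measure.IsStationary.inv_smul_mem_heaviestSubspaces [IsFiniteMeasure ν]
    {p : Measure (GL (Fin r) ℤ)} [IsProbabilityMeasure p] (hstat : ν.IsStationary p)
    {W : Submodule ℝ (Fin r → ℝ)} (hW : W ∈ heaviestSubspaces ν d) {g : GL (Fin r) ℤ}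
    (hg : p {g} ≠ 0) : g⁻¹ • W ∈ heaviestSubspaces ν d := by
  have hrank (g' : GL (Fin r) ℤ) : finrank ℝ ↥(g'⁻¹ • W) = d :=
    (Submodule.finrank_pointwise_smul _ W).trans hW.1
  have hmass : ν (g⁻¹ • W).projectivization = ν W.projectivization :=
    eq_of_le_of_lintegral_eq_of_measure_singleton_ne_zero
      (ψ := fun g' => ν (g'⁻¹ • W).projectivization) (fun g' => hW.2 _ (hrank g'))
      (by
        simp_rw [← preimage_glProjMap_projectivization]
        exact (hstat _ W.measurableSet_projectivization).symm)
      (measure_ne_top ν _) hg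
  exact ⟨hrank g, fun V hV => hmass ▸ hW.2 V hV⟩

theorem MeasureTheory.Measure.IsStationary.closure_le_stabilizer_heaviestSubspaces
    [IsFiniteMeasure ν] {p : Measure (GL (Fin r) ℤ)} [IsProbabilityMeasure p]
    (hstat : ν.IsStationary p) (hfin : (heaviestSubspaces ν d).Finite) :
    Subgroup.closure {g | p {g} ≠ 0} ≤
      MulAction.stabilizer (GL (Fin r) ℤ) (heaviestSubspaces ν d) :=
  (Subgroup.closure_le _).mpr fun _ hg => inv_mem_iff.mp <|
    hfin.mem_stabilizer_of_mapsTo fun _ hW => hstat.inv_smul_mem_heaviestSubspaces hW hg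

end HeaviestSubspaces

section StrongIrreducibility

variable {r : ℕ} {Γ : Subgroup (GL (Fin r) ℤ)}

theorem StronglyIrreducible.eq_bot_or_eq_top_of_finite_orbit (hsi : StronglyIrreducible Γ)
    {W : Submodule ℝ (Fin r → ℝ)} (horbit : (MulAction.orbit Γ W).Finite) : W = ⊥ ∨ W = ⊤ := by
  refine hsi (Γ ⊓ MulAction.stabilizer _ W) inf_le_left ?_ W fun g hg x hx => ?_
  · rw [Subgroup.inf_subgroupOf_left]
    exact MulAction.finiteIndex_stabilizer_of_finite_orbit horbit
  · rw [← Matrix.GeneralLinearGroup.smul_eq_mulVec_map, ← MulAction.mem_stabilizer_iff.mp hg.2]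
    exact Submodule.smul_mem_pointwise_smul x g W hx

theorem StronglyIrreducible.measure_projectivization_eq_zero (hsi : StronglyIrreducible Γ)
    {p : Measure (GL (Fin r) ℤ)} [IsProbabilityMeasure p]
    (hgen : Subgroup.closure {g | p {g} ≠ 0} = Γ) {ν : Measure (ℙ ℝ (Fin r → ℝ))}
    [IsFiniteMeasure ν] (hstat : ν.IsStationary p) {W : Submodule ℝ (Fin r → ℝ)} (hW : W ≠ ⊤) :
    ν W.projectivization = 0 := by
  induction hd : finrank ℝ W using Nat.strong_induction_on generalizing W with
  | _ d ih =>
    have hdr : d < finrank ℝ (Fin r → ℝ) := hd ▸ Submodule.finrank_lt hW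
    have hnull (V : Submodule ℝ (Fin r → ℝ)) (hV : finrank ℝ V < d) : ν V.projectivization = 0 :=
      ih _ hV (fun hVtop => (hV.trans hdr).ne (by rw [hVtop, finrank_top])) rfl
    by_contra hne
    obtain ⟨hfin, W₀, hW₀⟩ :=
      heaviestSubspaces_finite_and_nonempty hnull hd (pos_iff_ne_zero.mpr hne)
    have hΓ := hgen ▸ hstat.closure_le_stabilizer_heaviestSubspaces hfin
    have horbit : MulAction.orbit Γ W₀ ⊆ heaviestSubspaces ν d := by
      rintro _ ⟨g, rfl⟩
      change (g : GL (Fin r) ℤ) • W₀ ∈ _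
      rw [← MulAction.mem_stabilizer_iff.mp (hΓ g.2)]
      exact Set.smul_mem_smul_set hW₀
    rcases hsi.eq_bot_or_eq_top_of_finite_orbit (hfin.subset horbit) with rfl | rfl
    · exact hne (le_zero_iff.mp (by simpa using hW₀.2 W hd))
    · exact hdr.ne (hW₀.1 ▸ finrank_top ℝ _)

end StrongIrreducibility

theorem stationary_measure_null_hyperplane_general
    {r : ℕ} (Γ : Subgroup (Matrix.GeneralLinearGroup (Fin r) ℤ))
    (hsi : StronglyIrreducible Γ)
    (p : Measure (Matrix.GeneralLinearGroup (Fin r) ℤ)) [IsProbabilityMeasure p]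
    (hgen : Subgroup.closure {g | p {g} ≠ 0} = Γ)
    (ν : Measure (Projectivization ℝ (Fin r → ℝ))) [IsProbabilityMeasure ν]
    (hstat : ∀ A : Set (Projectivization ℝ (Fin r → ℝ)), MeasurableSet A →
      ν A = ∫⁻ g, ν (glProjMap g ⁻¹' A) ∂p)
    (w : Fin r → ℝ) (hw : w ≠ 0) :
    ν {q : Projectivization ℝ (Fin r → ℝ) | ∑ i, q.rep i * w i = 0} = 0 := by
  let L := LinearMap.ker ((dotProductBilin ℝ ℝ).flip w)
  have hL : L ≠ ⊤ := fun h => hw (dotProduct_self_eq_zero.mp (h ▸ Submodule.mem_top : w ∈ L))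
  have hset : {q : ℙ ℝ (Fin r → ℝ) | ∑ i, q.rep i * w i = 0} = L.projectivization := by
    ext q
    exact (L.mem_projectivization_iff_rep_mem q).symm
  rw [hset]
  exact hsi.measure_projectivization_eq_zero hgen hstat hL

/-- **Hyperplanes are null for stationary measures.** Let `Γ ≤ GL_r(ℤ)` be strongly
irreducible with a proximal element and `p` a generating probability measure on `Γ`.
Then every `p`-stationary probability measure `ν` on `ℙ(ℝ^r)` gives zero mass to the
projectivization `[L]` of every hyperplane `L = {x : ⟨x, w⟩ = 0} ⊆ ℝ^r`. -/
theorem stationary_measure_null_hyperplane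
    {r : ℕ} (Γ : Subgroup (Matrix.GeneralLinearGroup (Fin r) ℤ))
    (hsi : StronglyIrreducible Γ) (hprox : ∃ g ∈ Γ, IsProximal g)
    (p : Measure (Matrix.GeneralLinearGroup (Fin r) ℤ)) [IsProbabilityMeasure p]
    (hgen : Subgroup.closure {g | p {g} ≠ 0} = Γ)
    (ν : Measure (Projectivization ℝ (Fin r → ℝ))) [IsProbabilityMeasure ν]
    (hstat : ∀ A : Set (Projectivization ℝ (Fin r → ℝ)), MeasurableSet A →
      ν A = ∫⁻ g, ν (glProjMap g ⁻¹' A) ∂p)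
    (w : Fin r → ℝ) (hw : w ≠ 0) :
    ν {q : Projectivization ℝ (Fin r → ℝ) | ∑ i, q.rep i * w i = 0} = 0 :=
  stationary_measure_null_hyperplane_general Γ hsi p hgen ν hstat w hw
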